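/- arXiv:1905.08701 — 2 statements merged into one kernel-verified Lean document; each statement's English description precedes it below -/
import Mathlib

section
/- Let p_s and p_a be probabilistic models over Σ with state maps (Q_s, q_s, f_s) and (Q_a, q_a, f_a) respectively, such that L(p_s) ⊆ L(p_a), p_s terminates almost surely, and the families {p_s(x)·log(p_s(x)/p_a(x))}_{x∈L(p_s)} and {p_s(h)·p_s(x|h)·log(p_s(x|h)/p_a(x|h))}_{h a $-free history, x∈Σ} are absolutely summable. Then D(p_s‖p_a) = Σ_{σ∈Q_s} Σ_{α∈Q_a} Σ_{x∈Σ} γ(σ,α)·p_s(x|σ)·log(p_s(x|σ)/p_a(x|α)). -/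
open scoped BigOperators
open Classical
set_option maxRecDepth 8000

noncomputable section

variable {α : Type*}

/-- Probability of reading the string `x` after history `h` under conditional model `p`,
where `p h x` is the probability of next symbol `x` given history `h`. -/
def probFrom (p : List α → α → ℝ) : List α → List α → ℝ
  | _, [] => 1
  | h, x :: t => p h x * probFrom p (h ++ [x]) t

/-- Probability assigned to the string `x`: `p(x₁⋯xₙ) = ∏ᵢ p(xᵢ | x₁⋯xᵢ₋₁)`. -/
def strProb (p : List α → α → ℝ) (x : List α) : ℝ := probFrom p [] x

/-- `p` is a probabilistic model over `α` with distinguished end symbol `dollar`. -/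
structure IsProbModel [Fintype α] (dollar : α) (p : List α → α → ℝ) : Prop where
  nonneg : ∀ h x, 0 ≤ p h x
  sum_one : ∀ h, dollar ∉ h → ∑ x, p h x = 1
  halt : ∀ h, dollar ∈ h → ∀ x, p h x = 0

/-- The language of a model: strings of positive probability ending in (a single) `dollar`. -/
def Lang (dollar : α) (p : List α → α → ℝ) : Set (List α) :=
  {x | 0 < strProb p x ∧ ∃ w, x = w ++ [dollar] ∧ dollar ∉ w}

lemma probFrom_append (p : List α → α → ℝ) (a : List α) : ∀ (h b : List α),
    probFrom p h (a ++ b) = probFrom p h a * probFrom p (h ++ a) b := by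
  induction a with
  | nil => intro h b; simp [probFrom]
  | cons x t ih =>
      intro h b
      show p h x * probFrom p (h ++ [x]) (t ++ b)
          = probFrom p h (x :: t) * probFrom p (h ++ x :: t) b
      rw [ih (h ++ [x]) b, show probFrom p h (x :: t) = p h x * probFrom p (h ++ [x]) t from rfl,
        mul_assoc]
      simp [List.append_assoc]

lemma strProb_snoc (p : List α → α → ℝ) (u : List α) (y : α) :
    strProb p (u ++ [y]) = strProb p u * p u y := by
  simpa [strProb, probFrom] using probFrom_append p u [] [y]

lemma probFrom_nonneg {p : List α → α → ℝ} (hp : ∀ h x, 0 ≤ p h x) :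
    ∀ (l h : List α), 0 ≤ probFrom p h l
  | [], _ => zero_le_one
  | x :: t, h => mul_nonneg (hp _ _) (probFrom_nonneg hp t (h ++ [x]))

lemma strProb_nonneg {p : List α → α → ℝ} (hp : ∀ h x, 0 ≤ p h x) (x : List α) :
    0 ≤ strProb p x := probFrom_nonneg hp x []

lemma probFrom_eq_prod (p : List α → α → ℝ) : ∀ (l h : List α),
    probFrom p h l = ∏ i : Fin l.length, p (h ++ l.take i) l[i] := by
  intro l
  induction l with
  | nil => intro h; simp [probFrom]
  | cons x t ih =>
      intro h
      show p h x * probFrom p (h ++ [x]) t = _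
      rw [ih (h ++ [x])]
      refine Eq.trans ?_ (Fin.prod_univ_succ
        (f := fun i : Fin (t.length + 1) => p (h ++ (x :: t).take i.1) (x :: t)[i.1])).symm
      congr 1
      · simp
      · apply Finset.prod_congr rfl
        intro i _
        simp [List.take_succ_cons]

lemma strProb_eq_prod (p : List α → α → ℝ) (l : List α) :
    strProb p l = ∏ i : Fin l.length, p (l.take i) l[i] := by
  simpa [strProb] using probFrom_eq_prod p l []

lemma factor_pos {p : List α → α → ℝ} (hp : ∀ h x, 0 ≤ p h x) {l : List α}
    (hpos : 0 < strProb p l) (i : Fin l.length) : 0 < p (l.take i) l[i] := by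
  rcases (hp (l.take i) l[i]).lt_or_eq with h | h
  · exact h
  · exfalso
    rw [strProb_eq_prod] at hpos
    rw [Finset.prod_eq_zero (Finset.mem_univ i) h.symm] at hpos
    exact lt_irrefl 0 hpos

lemma getD_append_cons (u : List α) (y : α) (t : List α) (d : α) :
    ((u ++ y :: t)[u.length]?).getD d = y := by
  rw [List.getElem?_append_right (le_refl _)]
  simp

lemma eq_of_prefix_dollar {dollar : α} {u w : List α} (hu : dollar ∉ u) (hw : dollar ∉ w)
    (hpre : u ++ [dollar] <+: w ++ [dollar]) : w = u := by
  have hle : u.length ≤ w.length := by simpa using hpre.length_le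
  have hnlt : ¬ u.length < w.length := by
    intro hlt
    have h2 : u ++ [dollar] <+: w :=
      List.prefix_of_prefix_length_le hpre (List.prefix_append w [dollar]) (by simpa using hlt)
    exact hw (h2.subset (by simp))
  have hlen : u.length = w.length := le_antisymm hle (not_lt.mp hnlt)
  have h3 : u ++ [dollar] = w ++ [dollar] := by
    have := List.prefix_iff_eq_take.mp hpre
    rw [this]
    rw [show (u ++ [dollar]).length = (w ++ [dollar]).length by simp [hlen]]
    exact List.take_length
  exact ((List.append_inj h3 (by simp [hlen])).1).symm

lemma prefix_snoc_of_classifier {dollar : α} {u x : List α} (hu : dollar ∉ u)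
    (hx : ∃ w, x = w ++ [dollar] ∧ dollar ∉ w) (hpre : u <+: x) {y : α}
    (hc : (x[u.length]?).getD dollar = y) : u ++ [y] <+: x := by
  obtain ⟨t, ht⟩ := hpre
  cases t with
  | nil =>
      exfalso
      obtain ⟨w, hxw, hw⟩ := hx
      apply hu
      rw [show u = x by simpa using ht, hxw]
      simp
  | cons a t' =>
      have hay : a = y := by
        rw [← ht] at hc
        exact (getD_append_cons u a t' dollar).symm.trans hc
      exact ⟨t', by rw [← ht, hay]; simp⟩

lemma classifier_of_prefix_snoc {dollar : α} {u x : List α} {y : α}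
    (hpre : u ++ [y] <+: x) : (x[u.length]?).getD dollar = y := by
  obtain ⟨t, ht⟩ := hpre
  rw [← ht, List.append_assoc, List.singleton_append]
  exact getD_append_cons u y t dollar

lemma eq_snoc_dollar_of_prefix {dollar : α} {u x : List α} (hu : dollar ∉ u)
    (hx : x ∈ Lang dollar ps) (hpre : u ++ [dollar] <+: x) : x = u ++ [dollar] := by
  obtain ⟨pos, w, rfl, hw⟩ := hx
  rw [eq_of_prefix_dollar hu hw hpre]

lemma take_dollar_free {dollar : α} {x : List α} (hx : ∃ w, x = w ++ [dollar] ∧ dollar ∉ w)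
    (i : ℕ) (hi : i < x.length) : dollar ∉ x.take i := by
  obtain ⟨w, rfl, hw⟩ := hx
  have hle : i ≤ w.length := by simpa using Nat.lt_succ_iff.mp (by simpa using hi)
  rw [List.take_append_of_le_length hle]
  exact fun h => hw (List.take_subset _ _ h)

lemma take_snoc_prefix (x : List α) (i : ℕ) (hi : i < x.length) :
    x.take i ++ [x[i]] <+: x := by
  have := List.take_concat_get (l := x) (i := i) hi
  rw [List.concat_eq_append] at this
  rw [this]
  exact List.take_prefix _ _


/-- `p` terminates almost surely. -/
def TerminatesAS (dollar : α) (p : List α → α → ℝ) : Prop :=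
  ∑' x : Lang dollar p, strProb p x = 1

lemma lang_spec {dollar : α} {p : List α → α → ℝ} {x : List α} (hx : x ∈ Lang dollar p) :
    0 < strProb p x ∧ ∃ w, x = w ++ [dollar] ∧ dollar ∉ w := hx

lemma lang_intro {dollar : α} {p : List α → α → ℝ} {u : List α} (hpos : 0 < strProb p (u ++ [dollar]))
    (hu : dollar ∉ u) : (u ++ [dollar]) ∈ Lang dollar p := ⟨hpos, u, rfl, hu⟩

def mass (dollar : α) (ps : List α → α → ℝ) (u : List α) : ℝ :=
  ∑' z : {x : ↥(Lang dollar ps) // u <+: x.1}, strProb ps z.1.1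

lemma summable_lang {dollar : α} {ps : List α → α → ℝ} (h : TerminatesAS dollar ps) :
    Summable (fun x : Lang dollar ps => strProb ps x.1) := by
  by_contra hc
  rw [TerminatesAS, tsum_eq_zero_of_not_summable hc] at h
  norm_num at h

lemma summable_sub_lang {dollar : α} {ps : List α → α → ℝ}
    (hsum : Summable (fun x : Lang dollar ps => strProb ps x.1))
    (P : ↥(Lang dollar ps) → Prop) :
    Summable (fun z : {x : ↥(Lang dollar ps) // P x} => strProb ps z.1.1) :=
  hsum.subtype P

lemma tsum_fiberwise' {ι κ : Type*} [Fintype κ] (f : ι → ℝ) (hf : Summable f) (c : ι → κ) :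
    ∑' i, f i = ∑ k : κ, ∑' z : {i // c i = k}, f z.1 := by
  have h1 : Summable (fun p : (k : κ) × {i // c i = k} => f ((Equiv.sigmaFiberEquiv c) p)) :=
    (Equiv.sigmaFiberEquiv c).summable_iff.mpr hf
  rw [← (Equiv.sigmaFiberEquiv c).tsum_eq f, Summable.tsum_sigma h1, tsum_fintype]
  rfl

def fiberEquiv (dollar : α) (ps : List α → α → ℝ) (u : List α) (hu : dollar ∉ u) (y : α) :
    {z : {x : ↥(Lang dollar ps) // u <+: x.1} // ((z.1.1 : List α)[u.length]?).getD dollar = y} ≃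
      {x : ↥(Lang dollar ps) // u ++ [y] <+: x.1} where
  toFun z := ⟨z.1.1, prefix_snoc_of_classifier hu (lang_spec z.1.1.2).2 z.1.2 z.2⟩
  invFun x := ⟨⟨x.1, (List.prefix_append u [y]).trans x.2⟩, classifier_of_prefix_snoc x.2⟩
  left_inv z := Subtype.ext (Subtype.ext rfl)
  right_inv x := Subtype.ext rfl

lemma mass_rec [Fintype α] {dollar : α} {ps : List α → α → ℝ}
    (hsum : Summable (fun x : Lang dollar ps => strProb ps x.1))
    (u : List α) (hu : dollar ∉ u) :
    mass dollar ps u = ∑ y : α, mass dollar ps (u ++ [y]) := by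
  rw [mass, tsum_fiberwise' _ (summable_sub_lang hsum _)
    (fun z => ((z.1 : List α)[u.length]?).getD dollar)]
  apply Finset.sum_congr rfl
  intro y _
  exact ((fiberEquiv dollar ps u hu y).tsum_eq
    (fun x : {x : ↥(Lang dollar ps) // u ++ [y] <+: x.1} => strProb ps x.1.1))

lemma mass_dollar [Fintype α] {dollar : α} {ps : List α → α → ℝ} (hps : IsProbModel dollar ps)
    {u : List α} (hu : dollar ∉ u) :
    mass dollar ps (u ++ [dollar]) = strProb ps (u ++ [dollar]) := by
  by_cases hL : (u ++ [dollar]) ∈ Lang dollar ps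
  · rw [mass, tsum_eq_single
      (⟨⟨u ++ [dollar], hL⟩, List.prefix_refl _⟩ :
        {x : ↥(Lang dollar ps) // u ++ [dollar] <+: x.1})]
    intro b' hb'
    exact absurd (Subtype.ext (Subtype.ext (eq_snoc_dollar_of_prefix hu b'.1.2 b'.2))) hb'
  · have : IsEmpty {x : ↥(Lang dollar ps) // u ++ [dollar] <+: x.1} :=
      ⟨fun z => hL (by rw [← eq_snoc_dollar_of_prefix hu z.1.2 z.2]; exact z.1.2)⟩
    rw [mass, tsum_empty]
    have h1 : ¬ 0 < strProb ps (u ++ [dollar]) := fun h => hL (lang_intro h hu)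
    have h2 := strProb_nonneg hps.nonneg (u ++ [dollar])
    linarith

lemma finset_bound [Fintype α] {dollar : α} {ps : List α → α → ℝ} (hps : IsProbModel dollar ps) :
    ∀ (N : ℕ) (u : List α), dollar ∉ u → ∀ F : Finset (List α),
      (∀ x ∈ F, x ∈ Lang dollar ps ∧ u <+: x ∧ x.length ≤ u.length + N) →
      ∑ x ∈ F, strProb ps x ≤ strProb ps u := by
  intro N
  induction N with
  | zero =>
      intro u hu F hF
      have hFe : F = ∅ := by
        rw [Finset.eq_empty_iff_forall_notMem]
        intro x hx
        obtain ⟨hxL, hpre, hlen⟩ := hF x hx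
        have hne : u ≠ x := by
          obtain ⟨_, w, rfl, hw⟩ := hxL
          intro h
          apply hu
          rw [h]
          simp
        have hlen2 : u.length = x.length := le_antisymm hpre.length_le (by simpa using hlen)
        exact hne (hpre.eq_of_length hlen2)
      rw [hFe, Finset.sum_empty]
      exact strProb_nonneg hps.nonneg u
  | succ N ih =>
      intro u hu F hF
      rw [← Finset.sum_fiberwise_of_maps_to (t := (Finset.univ : Finset α))
        (g := fun x : List α => (x[u.length]?).getD dollar) (fun i _ => Finset.mem_univ _)
        (strProb ps)]
      have hb : ∀ y : α,
          ∑ x ∈ F.filter (fun x => (x[u.length]?).getD dollar = y), strProb ps x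
            ≤ strProb ps (u ++ [y]) := by
        intro y
        by_cases hy : dollar = y
        · subst hy
          have hsub : F.filter (fun x => (x[u.length]?).getD dollar = dollar) ⊆ {u ++ [dollar]} := by
            intro x hx
            rw [Finset.mem_filter] at hx
            obtain ⟨hxF, hc⟩ := hx
            obtain ⟨hxL, hpre, _⟩ := hF x hxF
            have h1 : u ++ [dollar] <+: x :=
              prefix_snoc_of_classifier hu (lang_spec hxL).2 hpre hc
            simp [eq_snoc_dollar_of_prefix hu hxL h1]
          calc ∑ x ∈ F.filter (fun x => (x[u.length]?).getD dollar = dollar), strProb ps x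
              ≤ ∑ x ∈ ({u ++ [dollar]} : Finset (List α)), strProb ps x :=
                Finset.sum_le_sum_of_subset_of_nonneg hsub
                  (fun x _ _ => strProb_nonneg hps.nonneg x)
            _ = strProb ps (u ++ [dollar]) := Finset.sum_singleton _ _
        · apply ih (u ++ [y])
          · intro hmem
            rcases List.mem_append.mp hmem with h' | h'
            · exact hu h'
            · exact hy (List.mem_singleton.mp h')
          · intro x hx
            rw [Finset.mem_filter] at hx
            obtain ⟨hxF, hc⟩ := hx
            obtain ⟨hxL, hpre, hlen⟩ := hF x hxF
            refine ⟨hxL, prefix_snoc_of_classifier hu (lang_spec hxL).2 hpre hc, ?_⟩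
            simp only [List.length_append, List.length_singleton]
            omega
      calc ∑ y : α, ∑ x ∈ F.filter (fun x => (x[u.length]?).getD dollar = y), strProb ps x
          ≤ ∑ y : α, strProb ps (u ++ [y]) := Finset.sum_le_sum (fun y _ => hb y)
        _ = strProb ps u := by
            simp [strProb_snoc, ← Finset.mul_sum, hps.sum_one u hu]

lemma mass_le [Fintype α] {dollar : α} {ps : List α → α → ℝ} (hps : IsProbModel dollar ps)
    (hsum : Summable (fun x : Lang dollar ps => strProb ps x.1))
    {u : List α} (hu : dollar ∉ u) : mass dollar ps u ≤ strProb ps u := by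
  apply Summable.tsum_le_of_sum_le (summable_sub_lang hsum _)
  intro s
  classical
  have hinj : ∀ z ∈ s, ∀ z' ∈ s, (z.1.1 : List α) = z'.1.1 → z = z' :=
    fun z _ z' _ h => Subtype.ext (Subtype.ext h)
  rw [show (∑ z ∈ s, strProb ps z.1.1)
      = ∑ x ∈ s.image (fun z => (z.1.1 : List α)), strProb ps x from
    (Finset.sum_image hinj).symm]
  apply finset_bound hps ((s.image (fun z => (z.1.1 : List α))).sup List.length) u hu
  intro x hx
  obtain ⟨z, hz, rfl⟩ := Finset.mem_image.mp hx
  exact ⟨z.1.2, z.2, le_trans (Finset.le_sup hx) (Nat.le_add_left _ _)⟩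

lemma mass_nil {dollar : α} {ps : List α → α → ℝ} (hterm : TerminatesAS dollar ps) :
    mass dollar ps [] = 1 := by
  have h := (Equiv.subtypeUnivEquiv
      (fun x : ↥(Lang dollar ps) => (List.nil_prefix : [] <+: x.1))).tsum_eq
    (fun x : ↥(Lang dollar ps) => strProb ps x.1)
  rw [mass]
  exact h.trans hterm

lemma mass_eq [Fintype α] {dollar : α} {ps : List α → α → ℝ} (hps : IsProbModel dollar ps)
    (hterm : TerminatesAS dollar ps) :
    ∀ u : List α, dollar ∉ u → mass dollar ps u = strProb ps u := by
  have hsum := summable_lang hterm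
  intro u
  induction u using List.reverseRecOn with
  | nil =>
      intro _
      rw [mass_nil hterm]
      rfl
  | append_singleton w y ih =>
      intro hu
      have hw : dollar ∉ w := fun h => hu (List.mem_append_left _ h)
      have h1 := mass_rec hsum w hw
      have h2 : strProb ps w = ∑ y' : α, strProb ps (w ++ [y']) := by
        simp [strProb_snoc, ← Finset.mul_sum, hps.sum_one w hw]
      have hnn : ∀ y' : α, 0 ≤ strProb ps (w ++ [y']) - mass dollar ps (w ++ [y']) := by
        intro y'
        by_cases hy' : dollar = y'
        · subst hy'
          rw [mass_dollar hps hw, sub_self]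
        · refine sub_nonneg.mpr (mass_le hps hsum ?_)
          intro hmem
          rcases List.mem_append.mp hmem with h' | h'
          · exact hw h'
          · exact hy' (List.mem_singleton.mp h')
      have h3 : ∑ y' : α, (strProb ps (w ++ [y']) - mass dollar ps (w ++ [y'])) = 0 := by
        rw [Finset.sum_sub_distrib, ← h2, ← h1, ih hw, sub_self]
      have h4 := (Finset.sum_eq_zero_iff_of_nonneg (fun y' _ => hnn y')).mp h3 y
        (Finset.mem_univ y)
      linarith

lemma mass_snoc [Fintype α] {dollar : α} {ps : List α → α → ℝ} (hps : IsProbModel dollar ps)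
    (hterm : TerminatesAS dollar ps) {h : List α} (hh : dollar ∉ h) (y : α) :
    mass dollar ps (h ++ [y]) = strProb ps h * ps h y := by
  rw [← strProb_snoc]
  by_cases hy : dollar = y
  · subst hy
    exact mass_dollar hps hh
  · apply mass_eq hps hterm
    intro hmem
    rcases List.mem_append.mp hmem with h' | h'
    · exact hh h'
    · exact hy (List.mem_singleton.mp h')


/-- KL divergence between two sequence models (with the convention `0·log(0/0) = 0`,
which holds definitionally here since `Real.log 0 = 0`). -/
def KLdiv (dollar : α) (ps pa : List α → α → ℝ) : ℝ :=
  ∑' x : Lang dollar ps, strProb ps x * Real.log (strProb ps x / strProb pa x)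

lemma kl_pointwise [Fintype α] {dollar : α} {ps pa : List α → α → ℝ}
    (hps : IsProbModel dollar ps) (hpa : IsProbModel dollar pa)
    (hsub : Lang dollar ps ⊆ Lang dollar pa) (x : List α) (hx : x ∈ Lang dollar ps) :
    strProb ps x * Real.log (strProb ps x / strProb pa x)
      = ∑ i : Fin x.length,
          strProb ps x * Real.log (ps (x.take i) x[i] / pa (x.take i) x[i]) := by
  have hxs : 0 < strProb ps x := (lang_spec hx).1
  have hxa : 0 < strProb pa x := (lang_spec (hsub hx)).1
  have hfs : ∀ i : Fin x.length, 0 < ps (x.take i) x[i] := factor_pos hps.nonneg hxs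
  have hfa : ∀ i : Fin x.length, 0 < pa (x.take i) x[i] := factor_pos hpa.nonneg hxa
  rw [← Finset.mul_sum]
  congr 1
  rw [Real.log_div hxs.ne' hxa.ne', strProb_eq_prod ps, strProb_eq_prod pa,
    Real.log_prod (fun i _ => (hfs i).ne'), Real.log_prod (fun i _ => (hfa i).ne'),
    ← Finset.sum_sub_distrib]
  exact Finset.sum_congr rfl (fun i _ => (Real.log_div (hfs i).ne' (hfa i).ne').symm)

def chainSig (dollar : α) (ps : List α → α → ℝ) : Type _ :=
  (z : {h : List α // dollar ∉ h} × α) ×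
    {x : ↥(Lang dollar ps) // z.1.1 ++ [z.2] <+: x.1}

def chainF (dollar : α) (ps pa : List α → α → ℝ) (a : chainSig dollar ps) : ℝ :=
  strProb ps a.2.1.1 * Real.log (ps a.1.1.1 a.1.2 / pa a.1.1.1 a.1.2)

def chainB (dollar : α) (ps : List α → α → ℝ) : Type _ :=
  (x : ↥(Lang dollar ps)) × Fin x.1.length

def chainJ (dollar : α) (ps : List α → α → ℝ) (b : chainB dollar ps) : chainSig dollar ps :=
  ⟨(⟨b.1.1.take b.2.1, take_dollar_free (lang_spec b.1.2).2 b.2.1 b.2.2⟩, b.1.1[b.2.1]'b.2.2),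
   ⟨b.1, take_snoc_prefix _ b.2.1 b.2.2⟩⟩

lemma chainJ_bijective (dollar : α) (ps : List α → α → ℝ) :
    Function.Bijective (chainJ dollar ps) := by
  constructor
  · intro b b' h
    have hx : b.1 = b'.1 :=
      Subtype.ext (congrArg (fun a : chainSig dollar ps => (a.2.1 : List α)) h)
    have hi : b.1.1.take b.2.1 = b'.1.1.take b'.2.1 :=
      congrArg (fun a : chainSig dollar ps => (a.1.1 : List α)) h
    have hl1 : (b.1.1.take b.2.1).length = b.2.1 := by
      rw [List.length_take]
      exact Nat.min_eq_left (le_of_lt b.2.2)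
    have hl2 : (b'.1.1.take b'.2.1).length = b'.2.1 := by
      rw [List.length_take]
      exact Nat.min_eq_left (le_of_lt b'.2.2)
    have hlen : (b.2.1 : ℕ) = b'.2.1 := by rw [← hl1, ← hl2, hi]
    obtain ⟨x, i⟩ := b
    obtain ⟨x', i'⟩ := b'
    simp only at hx
    cases hx
    have : i = i' := Fin.ext hlen
    rw [this]
  · intro a
    obtain ⟨⟨⟨h, hh⟩, y⟩, ⟨x, hpre⟩⟩ := a
    have hlt : h.length < (x : List α).length := by
      have := hpre.length_le
      simp only [List.length_append, List.length_singleton] at this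
      omega
    refine ⟨⟨x, ⟨h.length, hlt⟩⟩, ?_⟩
    obtain ⟨t, ht⟩ := hpre
    have htake : (x : List α).take h.length = h := by
      rw [← ht, List.append_assoc, List.singleton_append]
      exact List.take_left
    have hget : (x : List α)[h.length]'hlt = y := by
      have h1 := classifier_of_prefix_snoc (dollar := dollar) ⟨t, ht⟩
      rw [List.getElem?_eq_getElem hlt] at h1
      simpa using h1
    have hfst : ((⟨(x : List α).take h.length,
          take_dollar_free (lang_spec x.2).2 h.length hlt⟩,
          (x : List α)[h.length]'hlt) : {h : List α // dollar ∉ h} × α)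
        = (⟨h, hh⟩, y) := by
      apply Prod.ext
      · exact Subtype.ext htake
      · exact hget
    apply Sigma.ext
    · exact hfst
    · rw [Subtype.heq_iff_coe_eq]
      · rfl
      · intro x''
        have h2 : (chainJ dollar ps ⟨x, ⟨h.length, hlt⟩⟩).fst = (⟨h, hh⟩, y) := hfst
        rw [h2]

lemma kl_chain [Fintype α] {dollar : α} {ps pa : List α → α → ℝ}
    (hps : IsProbModel dollar ps) (hpa : IsProbModel dollar pa)
    (hsub : Lang dollar ps ⊆ Lang dollar pa) (hterm : TerminatesAS dollar ps)
    (hsum2 : Summable fun z : {h : List α // dollar ∉ h} × α =>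
      strProb ps z.1 * (ps z.1 z.2 * Real.log (ps z.1 z.2 / pa z.1 z.2))) :
    KLdiv dollar ps pa = ∑' z : {h : List α // dollar ∉ h} × α,
      strProb ps z.1 * (ps z.1 z.2 * Real.log (ps z.1 z.2 / pa z.1 z.2)) := by
  classical
  have hsumL : Summable (fun x : Lang dollar ps => strProb ps x.1) := summable_lang hterm
  -- summability of chainF
  have habs : Summable (fun a : chainSig dollar ps => |chainF dollar ps pa a|) := by
    refine (summable_sigma_of_nonneg (fun a => abs_nonneg _)).mpr ⟨?_, ?_⟩
    · intro z
      have he : (fun x : {x : ↥(Lang dollar ps) // z.1.1 ++ [z.2] <+: x.1} =>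
            |chainF dollar ps pa ⟨z, x⟩|)
          = fun x => strProb ps x.1.1 * |Real.log (ps z.1.1 z.2 / pa z.1.1 z.2)| := by
        funext x
        dsimp only [chainF]
        rw [abs_mul, abs_of_nonneg (strProb_nonneg hps.nonneg _)]
      rw [he]
      exact (summable_sub_lang hsumL _).mul_right _
    · apply Summable.congr hsum2.abs
      intro z
      have he : (fun x : {x : ↥(Lang dollar ps) // z.1.1 ++ [z.2] <+: x.1} =>
            |chainF dollar ps pa ⟨z, x⟩|)
          = fun x => strProb ps x.1.1 * |Real.log (ps z.1.1 z.2 / pa z.1.1 z.2)| := by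
        funext x
        dsimp only [chainF]
        rw [abs_mul, abs_of_nonneg (strProb_nonneg hps.nonneg _)]
      rw [he, tsum_mul_right,
        show (∑' x : {x : ↥(Lang dollar ps) // z.1.1 ++ [z.2] <+: x.1}, strProb ps x.1.1)
          = mass dollar ps (z.1.1 ++ [z.2]) from rfl,
        mass_snoc hps hterm z.1.2 z.2, abs_mul, abs_mul,
        abs_of_nonneg (strProb_nonneg hps.nonneg _), abs_of_nonneg (hps.nonneg _ _)]
      ring
  have hFsum : Summable (chainF dollar ps pa) := summable_abs_iff.mp habs
  have hgsum : Summable (chainF dollar ps pa ∘ chainJ dollar ps) :=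
    hFsum.comp_injective (chainJ_bijective dollar ps).1
  -- per-z fiber value
  have hz : ∀ z : {h : List α // dollar ∉ h} × α,
      (∑' x : {x : ↥(Lang dollar ps) // z.1.1 ++ [z.2] <+: x.1}, chainF dollar ps pa ⟨z, x⟩)
        = strProb ps z.1 * (ps z.1 z.2 * Real.log (ps z.1 z.2 / pa z.1 z.2)) := by
    intro z
    have he : (fun x : {x : ↥(Lang dollar ps) // z.1.1 ++ [z.2] <+: x.1} =>
          chainF dollar ps pa ⟨z, x⟩)
        = fun x => strProb ps x.1.1 * Real.log (ps z.1.1 z.2 / pa z.1.1 z.2) := rfl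
    rw [he, tsum_mul_right,
      show (∑' x : {x : ↥(Lang dollar ps) // z.1.1 ++ [z.2] <+: x.1}, strProb ps x.1.1)
        = mass dollar ps (z.1.1 ++ [z.2]) from rfl,
      mass_snoc hps hterm z.1.2 z.2]
    ring
  calc KLdiv dollar ps pa
      = ∑' x : ↥(Lang dollar ps), ∑ i : Fin x.1.length,
          strProb ps x.1 * Real.log (ps (x.1.take i) x.1[i] / pa (x.1.take i) x.1[i]) :=
        tsum_congr (fun x => kl_pointwise hps hpa hsub x.1 x.2)
    _ = ∑' x : ↥(Lang dollar ps), ∑' i : Fin x.1.length,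
          strProb ps x.1 * Real.log (ps (x.1.take i) x.1[i] / pa (x.1.take i) x.1[i]) :=
        tsum_congr (fun x => (tsum_fintype _).symm)
    _ = ∑' b : chainB dollar ps, (chainF dollar ps pa ∘ chainJ dollar ps) b :=
        (Summable.tsum_sigma hgsum).symm
    _ = ∑' a : chainSig dollar ps, chainF dollar ps pa a :=
        (Equiv.ofBijective (chainJ dollar ps) (chainJ_bijective dollar ps)).tsum_eq
          (chainF dollar ps pa)
    _ = ∑' z : {h : List α // dollar ∉ h} × α,
          ∑' x : {x : ↥(Lang dollar ps) // z.1.1 ++ [z.2] <+: x.1}, chainF dollar ps pa ⟨z, x⟩ :=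
        Summable.tsum_sigma hFsum
    _ = ∑' z : {h : List α // dollar ∉ h} × α,
          strProb ps z.1 * (ps z.1 z.2 * Real.log (ps z.1 z.2 / pa z.1 z.2)) :=
        tsum_congr hz


lemma regroup_abstract {ι κ : Type*} (f : ι → ℝ) (c : ι → κ) (hf : Summable f) :
    ∑' i, f i = ∑' k : κ, ∑' z : {i // c i = k}, f z.1 := by
  have h1 : Summable (fun p : (k : κ) × {i // c i = k} => f ((Equiv.sigmaFiberEquiv c) p)) :=
    (Equiv.sigmaFiberEquiv c).summable_iff.mpr hf
  rw [← (Equiv.sigmaFiberEquiv c).tsum_eq f, Summable.tsum_sigma h1]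
  rfl

lemma summable_fiber_tsum {ι κ : Type*} (f : ι → ℝ) (c : ι → κ) (hf : Summable f) :
    Summable (fun k : κ => ∑' z : {i // c i = k}, f z.1) := by
  have habs : Summable (fun p : (k : κ) × {i // c i = k} =>
      |f ((Equiv.sigmaFiberEquiv c) p)|) :=
    ((Equiv.sigmaFiberEquiv c).summable_iff.mpr hf).abs
  have h2 := (summable_sigma_of_nonneg (fun p => abs_nonneg _)).mp habs
  refine summable_abs_iff.mp (Summable.of_nonneg_of_le (fun k => abs_nonneg _)
    (fun k => ?_) h2.2)
  have hs : Summable (fun z : {i // c i = k} => ‖f z.1‖) := by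
    simpa [Real.norm_eq_abs] using h2.1 k
  simpa [Real.norm_eq_abs] using norm_tsum_le_tsum_norm hs

def stateFiberEquiv {Qs Qa : Type*} (dollar : α) (qs : List α → Qs) (qa : List α → Qa)
    (k : Qs × Qa × α) :
    {z : {h : List α // dollar ∉ h} × α // (qs z.1.1, qa z.1.1, z.2) = k} ≃
      {w : List α // dollar ∉ w ∧ qs w = k.1 ∧ qa w = k.2.1} where
  toFun z := ⟨z.1.1.1, z.1.1.2,
    congrArg (fun p : Qs × Qa × α => p.1) z.2, congrArg (fun p : Qs × Qa × α => p.2.1) z.2⟩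
  invFun w := ⟨⟨⟨w.1, w.2.1⟩, k.2.2⟩, by
    obtain ⟨hw, h1, h2⟩ := w.2
    simp [h1, h2]⟩
  left_inv z := by
    apply Subtype.ext
    apply Prod.ext
    · exact Subtype.ext rfl
    · exact (congrArg (fun p : Qs × Qa × α => p.2.2) z.2).symm
  right_inv w := Subtype.ext rfl

lemma regroup {Qs Qa : Type*} [Fintype α] {dollar : α} (ps : List α → α → ℝ)
    (qs : List α → Qs) (qa : List α → Qa) (G : Qs → Qa → α → ℝ)
    (hsum : Summable fun z : {h : List α // dollar ∉ h} × α =>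
      strProb ps z.1 * G (qs z.1) (qa z.1) z.2) :
    (∑' z : {h : List α // dollar ∉ h} × α, strProb ps z.1 * G (qs z.1) (qa z.1) z.2)
      = ∑' σ : Qs, ∑' a : Qa, ∑ y : α,
          (∑' w : {w : List α // dollar ∉ w ∧ qs w = σ ∧ qa w = a}, strProb ps w) * G σ a y := by
  classical
  rw [regroup_abstract (fun z : {h : List α // dollar ∉ h} × α =>
      strProb ps z.1 * G (qs z.1) (qa z.1) z.2)
    (fun z => (qs z.1.1, qa z.1.1, z.2)) hsum]
  have hfibval : ∀ k : Qs × Qa × α,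
      (∑' z : {z : {h : List α // dollar ∉ h} × α // (qs z.1.1, qa z.1.1, z.2) = k},
          strProb ps z.1.1 * G (qs z.1.1.1) (qa z.1.1.1) z.1.2)
        = (∑' w : {w : List α // dollar ∉ w ∧ qs w = k.1 ∧ qa w = k.2.1}, strProb ps w.1)
            * G k.1 k.2.1 k.2.2 := by
    intro k
    have hcongr : ∀ z : {z : {h : List α // dollar ∉ h} × α // (qs z.1.1, qa z.1.1, z.2) = k},
        strProb ps z.1.1 * G (qs z.1.1.1) (qa z.1.1.1) z.1.2
          = strProb ps z.1.1 * G k.1 k.2.1 k.2.2 := by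
      intro z
      obtain ⟨z', hz⟩ := z
      subst hz
      rfl
    rw [tsum_congr hcongr, tsum_mul_right]
    congr 1
    exact (stateFiberEquiv dollar qs qa k).tsum_eq (fun w => strProb ps w.1)
  have hH : Summable (fun k : Qs × Qa × α =>
      (∑' w : {w : List α // dollar ∉ w ∧ qs w = k.1 ∧ qa w = k.2.1}, strProb ps w.1)
        * G k.1 k.2.1 k.2.2) := by
    apply Summable.congr (summable_fiber_tsum (fun z : {h : List α // dollar ∉ h} × α =>
      strProb ps z.1 * G (qs z.1) (qa z.1) z.2) (fun z => (qs z.1.1, qa z.1.1, z.2)) hsum)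
    exact hfibval
  rw [tsum_congr hfibval, Summable.tsum_prod hH]
  apply tsum_congr
  intro σ
  rw [Summable.tsum_prod (hH.prod_factor σ)]
  apply tsum_congr
  intro a
  rw [tsum_fintype]

set_option maxHeartbeats 2000000 in
/-- **Lemma 1 of the paper.** With state maps for source and target, the KL
divergence decomposes through the joint state weights
`γ(σ,α) = Σ_{$-free w : q_s(w)=σ, q_a(w)=α} p_s(w)`. -/
theorem kl_state_decomposition [Fintype α] {Qs Qa : Type*} (dollar : α)
    (ps pa : List α → α → ℝ)
    (hps : IsProbModel dollar ps) (hpa : IsProbModel dollar pa)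
    (qs : List α → Qs) (fs : α → Qs → ℝ)
    (qa : List α → Qa) (fa : α → Qa → ℝ)
    (hfs : ∀ h : List α, dollar ∉ h → ∀ x : α, ps h x = fs x (qs h))
    (hfa : ∀ h : List α, dollar ∉ h → ∀ x : α, pa h x = fa x (qa h))
    (hsub : Lang dollar ps ⊆ Lang dollar pa)
    (hterm : TerminatesAS dollar ps)
    (hsum1 : Summable fun x : Lang dollar ps =>
      strProb ps x * Real.log (strProb ps x / strProb pa x))
    (hsum2 : Summable fun z : {h : List α // dollar ∉ h} × α =>
      strProb ps z.1 * (ps z.1 z.2 * Real.log (ps z.1 z.2 / pa z.1 z.2))) :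
    KLdiv dollar ps pa
      = ∑' σ : Qs, ∑' a : Qa, ∑ x : α,
          (∑' w : {w : List α // dollar ∉ w ∧ qs w = σ ∧ qa w = a}, strProb ps w)
            * fs x σ * Real.log (fs x σ / fa x a) := by
  classical
  have hpoint : ∀ z : {h : List α // dollar ∉ h} × α,
      strProb ps z.1 * (ps z.1 z.2 * Real.log (ps z.1 z.2 / pa z.1 z.2))
        = strProb ps z.1 *
            (fun σ a y => fs y σ * Real.log (fs y σ / fa y a)) (qs z.1) (qa z.1) z.2 := by
    intro z
    rw [hfs z.1.1 z.1.2, hfa z.1.1 z.1.2]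
  have hG : Summable (fun z : {h : List α // dollar ∉ h} × α =>
      strProb ps z.1 *
        (fun σ a y => fs y σ * Real.log (fs y σ / fa y a)) (qs z.1) (qa z.1) z.2) :=
    Summable.congr hsum2 hpoint
  have c1 := kl_chain hps hpa hsub hterm hsum2
  have c2 := regroup ps qs qa (fun σ a y => fs y σ * Real.log (fs y σ / fa y a)) hG
  rw [c1, tsum_congr hpoint, c2]
  apply tsum_congr
  intro σ
  apply tsum_congr
  intro a
  apply Finset.sum_congr rfl
  intro y _
  exact (mul_assoc _ _ _).symm

end
end

section
/- Let A be a backoff-complete topology over Σ, let p be an ε-companion distribution with induced distribution p*, and let c : Σ × Q → ℝ be nonnegative counts with c(x,q) = 0 whenever x ∉ L*[q]. Then Σ_{q∈Q} Σ_{x∈L*[q]} c(x,q)·log p*(x|q) = Σ_{q∈Q} [ Σ_{x∈L[q]} C(x,q)·log p(x|q) + C(φ,q)·log p(φ|q) − Σ_{q₀∈B₁(q)} C(φ,q₀)·log d(q₀,q) ]. -/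
/-!
Write the backoff chain of `q` as `q = s₀, s₁, …, sₙ = q^x`. Since `p*(x|q)` is a product of
positive factors (`ε > 0`, and `d > 0` by backoff-completeness),
`log p*(x|q) = log p(x|q^x) + ∑_{k<n} (log p(φ|sₖ) - log d(sₖ, sₖ₊₁))`,
and since label sets grow along the chain, the `sₖ` with `k < n` are exactly the states of the
chain whose label set misses `x`. Weighting by `c(x,q)` and exchanging the order of summation,
`log p(x|q)` collects the coefficient `C(x,q)` and `log p(φ|q) - log d(q, bo q)` the coefficient
`C(φ,q)`; reindexing the `d`-terms by `q₀ ↦ bo q₀` turns them into the sums over `B₁(q)`.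
-/

open scoped BigOperators
open Classical

noncomputable section

variable {α : Type*} {Q : Type*}

/-- A backoff-complete topology over the alphabet `α` with states `Q`. -/
structure BackoffTopology (α : Type*) (Q : Type*) where
  supp : Q → Finset α
  bo : Q → Option Q
  rank : Q → ℕ
  rank_lt : ∀ q q', bo q = some q' → rank q' < rank q
  supp_sub : ∀ q q', bo q = some q' → supp q ⊆ supp q'
  supp_ssub : ∀ q q', bo q = some q' → bo q' = none → supp q ⊂ supp q'

namespace BackoffTopology

/-- `iter n q` is the `n`-th state of the backoff chain of `q` (if it exists). -/
def iter (T : BackoffTopology α Q) : ℕ → Q → Option Q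
  | 0, q => some q
  | n + 1, q => (T.iter n q).bind T.bo

/-- `L*[q]`: union of the label sets along the backoff chain of `q`. -/
def suppStar (T : BackoffTopology α Q) (q : Q) : Set α :=
  {x | ∃ n q', T.iter n q = some q' ∧ x ∈ T.supp q'}

/-- `q^x`: the first state of the backoff chain of `q` whose label set contains `x`. -/
def qx (T : BackoffTopology α Q) (q : Q) (x : α) : Option Q :=
  if h : ∃ n, ∃ q', T.iter n q = some q' ∧ x ∈ T.supp q'
  then T.iter (Nat.find h) q
  else none

/-- `B(q)`: states whose backoff chain contains `q`. -/
def B [Fintype Q] (T : BackoffTopology α Q) (q : Q) : Finset Q :=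
  Finset.univ.filter fun qa => ∃ n, T.iter n qa = some q

/-- `B₁(q)`: states backing off to `q` in one step. -/
def B1 [Fintype Q] (T : BackoffTopology α Q) (q : Q) : Finset Q :=
  Finset.univ.filter fun q₀ => T.bo q₀ = some q

end BackoffTopology

/-- An ε-companion distribution on a backoff-complete topology: `p q x` is `p(x|q)` and
`pphi q` is `p(φ|q)`. -/
structure Companion (T : BackoffTopology α Q) (ε : ℝ) where
  p : Q → α → ℝ
  pphi : Q → ℝ
  p_ge : ∀ q, ∀ x ∈ T.supp q, ε ≤ p q x
  pphi_ge : ∀ q q', T.bo q = some q' → ε ≤ pphi q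
  pphi_none : ∀ q, T.bo q = none → pphi q = 0
  total : ∀ q, (∑ x ∈ T.supp q, p q x) + pphi q = 1

namespace Companion

variable {T : BackoffTopology α Q} {ε : ℝ}

/-- `d(q₀,q) = 1 − Σ_{x∈L[q₀]} p(x|q)`, for `bo q₀ = q`. -/
def d (c : Companion T ε) (q₀ q : Q) : ℝ :=
  1 - ∑ x ∈ T.supp q₀, c.p q x

/-- `alphaN n q = α(q, q″)` where `q″` is the `n`-th state of the backoff chain of `q`:
the product of `p(φ|s)/d(s,bo(s))` over the first `n` states `s` of the chain. -/
def alphaN (c : Companion T ε) : ℕ → Q → ℝ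
  | 0, _ => 1
  | n + 1, q =>
    match T.bo q with
    | none => 1
    | some q' => c.pphi q / c.d q q' * c.alphaN n q'

/-- The induced distribution `p*(x|q) = α(q,q^x)·p(x|q^x)` for `x ∈ L*[q]`, else `0`. -/
def pStar (c : Companion T ε) (q : Q) (x : α) : ℝ :=
  if h : ∃ n, ∃ q', T.iter n q = some q' ∧ x ∈ T.supp q'
  then c.alphaN (Nat.find h) q * c.p ((T.iter (Nat.find h) q).getD q) x
  else 0

end Companion

/-- `C(x,q) = Σ_{q_a ∈ B(q)} c(x,q_a)·1[q_a^x = q]` for `x ∈ Σ`. -/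
def Cx [Fintype Q] (T : BackoffTopology α Q) (c : α → Q → ℝ) (x : α) (q : Q) : ℝ :=
  ∑ qa ∈ T.B q, if T.qx qa x = some q then c x qa else 0

/-- `C(φ,q) = Σ_{q_a ∈ B(q)} Σ_{x ∉ L[q]} c(x,q_a)`. -/
def Cphi [Fintype α] [Fintype Q] (T : BackoffTopology α Q) (c : α → Q → ℝ) (q : Q) : ℝ :=
  ∑ qa ∈ T.B q, ∑ x : α, if x ∈ T.supp q then 0 else c x qa

namespace BackoffTopology

variable (T : BackoffTopology α Q) {q q' : Q} {x : α}

theorem iter_succ_of_bo_eq_some (hb : T.bo q = some q') (n : ℕ) :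
    T.iter (n + 1) q = T.iter n q' := by
  induction n with
  | zero => exact hb
  | succ n ih => rw [iter, ih]; rfl

theorem iter_succ_of_bo_eq_none (hb : T.bo q = none) (n : ℕ) : T.iter (n + 1) q = none := by
  induction n with
  | zero => exact hb
  | succ n ih => rw [iter, ih]; rfl

theorem rank_le_of_iter_eq_some : ∀ {n : ℕ} {q q' : Q}, T.iter n q = some q' → T.rank q' ≤ T.rank q
  | 0, _, _, h => by cases h; rfl
  | n + 1, q, q', h => by
    cases hb : T.bo q with
    | none => rw [T.iter_succ_of_bo_eq_none hb] at h; cases h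
    | some q₁ =>
      rw [T.iter_succ_of_bo_eq_some hb] at h
      exact (rank_le_of_iter_eq_some h).trans (T.rank_lt q q₁ hb).le

theorem mem_suppStar_of_mem_supp (hx : x ∈ T.supp q) : x ∈ T.suppStar q := ⟨0, q, rfl, hx⟩

theorem mem_suppStar_iff_of_bo_eq_some (hb : T.bo q = some q') (hx : x ∉ T.supp q) :
    x ∈ T.suppStar q ↔ x ∈ T.suppStar q' := by
  constructor
  · rintro ⟨_ | n, q'', hn, hxq''⟩
    · cases hn; exact absurd hxq'' hx
    · exact ⟨n, q'', by rwa [T.iter_succ_of_bo_eq_some hb] at hn, hxq''⟩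
  · rintro ⟨n, q'', hn, hxq''⟩
    exact ⟨n + 1, q'', by rwa [T.iter_succ_of_bo_eq_some hb], hxq''⟩

theorem mem_suppStar_induction {P : Q → α → Prop}
    (base : ∀ q x, x ∈ T.supp q → P q x)
    (step : ∀ q q' x, T.bo q = some q' → x ∉ T.supp q → x ∈ T.suppStar q' → P q' x → P q x)
    (hx : x ∈ T.suppStar q) : P q x := by
  obtain ⟨n, q'', hn, hxq''⟩ := hx
  induction n generalizing q with
  | zero => cases hn; exact base _ _ hxq''
  | succ n ih =>
    cases hb : T.bo q with
    | none => rw [T.iter_succ_of_bo_eq_none hb] at hn; cases hn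
    | some q₁ =>
      rw [T.iter_succ_of_bo_eq_some hb] at hn
      by_cases hxq : x ∈ T.supp q
      · exact base _ _ hxq
      · exact step q q₁ x hb hxq ⟨n, q'', hn, hxq''⟩ (ih hn)

theorem find_mem_suppStar_of_mem_supp (hx : x ∈ T.supp q) (h : x ∈ T.suppStar q) :
    Nat.find h = 0 :=
  (Nat.find_eq_zero h).mpr ⟨q, rfl, hx⟩

theorem find_mem_suppStar_of_bo_eq_some (hb : T.bo q = some q') (hx : x ∉ T.supp q)
    (h : x ∈ T.suppStar q) (h' : x ∈ T.suppStar q') : Nat.find h = Nat.find h' + 1 := by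
  have hshift : ∃ n, ∃ q'', T.iter (n + 1) q = some q'' ∧ x ∈ T.supp q'' := by
    obtain ⟨n, q'', hn, hxq''⟩ := h'
    exact ⟨n, q'', by rwa [T.iter_succ_of_bo_eq_some hb], hxq''⟩
  rw [Nat.find_comp_succ h hshift (by rintro ⟨_, ⟨⟩, hxq⟩; exact hx hxq)]
  exact congrArg (· + 1)
    (Nat.find_congr' (by simp only [T.iter_succ_of_bo_eq_some hb, implies_true]))

theorem qx_of_mem_suppStar (h : x ∈ T.suppStar q) : T.qx q x = T.iter (Nat.find h) q :=
  dif_pos h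

theorem qx_of_notMem_suppStar (h : x ∉ T.suppStar q) : T.qx q x = none :=
  dif_neg h

theorem qx_of_mem_supp (hx : x ∈ T.supp q) : T.qx q x = some q := by
  have h := T.mem_suppStar_of_mem_supp hx
  rw [T.qx_of_mem_suppStar h, T.find_mem_suppStar_of_mem_supp hx h]
  rfl

theorem qx_of_bo_eq_some (hb : T.bo q = some q') (hx : x ∉ T.supp q) : T.qx q x = T.qx q' x := by
  have hiff := T.mem_suppStar_iff_of_bo_eq_some hb hx
  by_cases h' : x ∈ T.suppStar q'
  · have h := hiff.mpr h'
    rw [T.qx_of_mem_suppStar h, T.qx_of_mem_suppStar h',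
      T.find_mem_suppStar_of_bo_eq_some hb hx h h', T.iter_succ_of_bo_eq_some hb]
  · rw [T.qx_of_notMem_suppStar (mt hiff.mp h'), T.qx_of_notMem_suppStar h']

theorem qx_eq_some_spec (h : T.qx q x = some q') :
    (∃ n, T.iter n q = some q') ∧ x ∈ T.supp q' := by
  rw [qx] at h
  split_ifs at h with hx
  obtain ⟨q'', hq'', hxq''⟩ := Nat.find_spec hx
  rw [hq''] at h
  cases h
  exact ⟨⟨_, hq''⟩, hxq''⟩

section Fintype

variable [Fintype Q]

def chain (q : Q) : Finset Q :=
  Finset.univ.filter fun q' ↦ ∃ n, T.iter n q = some q'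

theorem chain_of_bo_eq_some (hb : T.bo q = some q') : T.chain q = insert q (T.chain q') := by
  ext q''
  simp only [chain, Finset.mem_insert, Finset.mem_filter, Finset.mem_univ, true_and]
  constructor
  · rintro ⟨_ | n, hn⟩
    · exact .inl (Option.some_injective _ hn).symm
    · exact .inr ⟨n, by rwa [T.iter_succ_of_bo_eq_some hb] at hn⟩
  · rintro (rfl | ⟨n, hn⟩)
    · exact ⟨0, rfl⟩
    · exact ⟨n + 1, by rwa [T.iter_succ_of_bo_eq_some hb]⟩

theorem self_notMem_chain_of_bo_eq_some (hb : T.bo q = some q') : q ∉ T.chain q' := by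
  simp only [chain, Finset.mem_filter, Finset.mem_univ, true_and, not_exists]
  intro n hn
  exact lt_irrefl _ ((T.rank_lt q q' hb).trans_le (T.rank_le_of_iter_eq_some hn))

theorem supp_subset_of_mem_chain (h : q' ∈ T.chain q) : T.supp q ⊆ T.supp q' := by
  obtain ⟨n, hn⟩ := (Finset.mem_filter.mp h).2
  clear h
  induction n generalizing q with
  | zero => cases hn; rfl
  | succ n ih =>
    cases hb : T.bo q with
    | none => rw [T.iter_succ_of_bo_eq_none hb] at hn; cases hn
    | some q₁ =>
      rw [T.iter_succ_of_bo_eq_some hb] at hn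
      exact (T.supp_sub q q₁ hb).trans (ih hn)

theorem sum_sum_B1 {M : Type*} [AddCommMonoid M] (f : Q → Q → M) :
    ∑ q, ∑ q₀ ∈ T.B1 q, f q₀ q = ∑ q₀, (T.bo q₀).elim 0 (f q₀) := by
  simp only [BackoffTopology.B1, Finset.sum_filter]
  rw [Finset.sum_comm]
  refine Finset.sum_congr rfl fun q₀ _ ↦ ?_
  cases T.bo q₀ <;> simp

end Fintype

end BackoffTopology

namespace Companion

variable {T : BackoffTopology α Q} {ε : ℝ} (p : Companion T ε) {q q' : Q} {x : α}

theorem d_eq_sum_sdiff_add_pphi (h : T.supp q ⊆ T.supp q') :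
    p.d q q' = ∑ x ∈ T.supp q' \ T.supp q, p.p q' x + p.pphi q' := by
  have htotal := p.total q'
  rw [← Finset.sum_sdiff h] at htotal
  rw [d]
  linarith

theorem d_pos (hε : 0 < ε) (hb : T.bo q = some q') : 0 < p.d q q' := by
  have hpos : ∀ y ∈ T.supp q', 0 < p.p q' y := fun y hy ↦ hε.trans_le (p.p_ge q' y hy)
  rw [p.d_eq_sum_sdiff_add_pphi (T.supp_sub q q' hb)]
  cases hb' : T.bo q' with
  | some q'' =>
    exact add_pos_of_nonneg_of_pos
      (Finset.sum_nonneg fun y hy ↦ (hpos y (Finset.mem_sdiff.mp hy).1).le)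
      (hε.trans_le (p.pphi_ge q' q'' hb'))
  | none =>
    -- backoff-completeness: `L[q] ⊊ L[q']` at the end of a chain, so the sum has a positive term
    obtain ⟨y, hy', hy⟩ := Finset.exists_of_ssubset (T.supp_ssub q q' hb hb')
    rw [p.pphi_none q' hb', add_zero]
    exact Finset.sum_pos (fun y hy ↦ hpos y (Finset.mem_sdiff.mp hy).1)
      ⟨y, Finset.mem_sdiff.mpr ⟨hy', hy⟩⟩

theorem alphaN_succ_of_bo_eq_some (hb : T.bo q = some q') (n : ℕ) :
    p.alphaN (n + 1) q = p.pphi q / p.d q q' * p.alphaN n q' := by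
  rw [alphaN, hb]

theorem pStar_of_mem_suppStar (h : x ∈ T.suppStar q) :
    p.pStar q x = p.alphaN (Nat.find h) q * p.p ((T.iter (Nat.find h) q).getD q) x :=
  dif_pos h

theorem pStar_of_notMem_suppStar (h : x ∉ T.suppStar q) : p.pStar q x = 0 :=
  dif_neg h

theorem pStar_of_mem_supp (hx : x ∈ T.supp q) : p.pStar q x = p.p q x := by
  have h := T.mem_suppStar_of_mem_supp hx
  rw [p.pStar_of_mem_suppStar h, T.find_mem_suppStar_of_mem_supp hx h, alphaN, one_mul]
  rfl

theorem pStar_of_bo_eq_some (hb : T.bo q = some q') (hx : x ∉ T.supp q) :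
    p.pStar q x = p.pphi q / p.d q q' * p.pStar q' x := by
  have hiff := T.mem_suppStar_iff_of_bo_eq_some hb hx
  by_cases h' : x ∈ T.suppStar q'
  · have h := hiff.mpr h'
    obtain ⟨q'', hq'', -⟩ := Nat.find_spec h'
    rw [p.pStar_of_mem_suppStar h, p.pStar_of_mem_suppStar h',
      T.find_mem_suppStar_of_bo_eq_some hb hx h h', p.alphaN_succ_of_bo_eq_some hb,
      T.iter_succ_of_bo_eq_some hb, hq'', Option.getD_some, Option.getD_some, mul_assoc]
  · rw [p.pStar_of_notMem_suppStar (mt hiff.mp h'), p.pStar_of_notMem_suppStar h', mul_zero]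

theorem pStar_pos (hε : 0 < ε) (h : x ∈ T.suppStar q) : 0 < p.pStar q x := by
  refine T.mem_suppStar_induction (P := fun q x ↦ 0 < p.pStar q x) (fun q x hx ↦ ?_)
    (fun q q' x hb hx _ ih ↦ ?_) h
  · rw [p.pStar_of_mem_supp hx]
    exact hε.trans_le (p.p_ge q x hx)
  · rw [p.pStar_of_bo_eq_some hb hx]
    exact mul_pos (div_pos (hε.trans_le (p.pphi_ge q q' hb)) (p.d_pos hε hb)) ih

/-- `log (p(φ|q) / d(q, bo q))`, the logarithm of one factor of `α`. -/
def logBackoffFactor (q : Q) : ℝ :=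
  Real.log (p.pphi q) - (T.bo q).elim 0 fun q' ↦ Real.log (p.d q q')

theorem log_pStar [Fintype Q] (hε : 0 < ε) (h : x ∈ T.suppStar q) :
    Real.log (p.pStar q x) = (T.qx q x).elim 0 (fun q' ↦ Real.log (p.p q' x))
      + ∑ q' ∈ T.chain q, if x ∈ T.supp q' then 0 else p.logBackoffFactor q' := by
  refine T.mem_suppStar_induction (P := fun q x ↦ Real.log (p.pStar q x)
    = (T.qx q x).elim 0 (fun q' ↦ Real.log (p.p q' x))
      + ∑ q' ∈ T.chain q, if x ∈ T.supp q' then 0 else p.logBackoffFactor q')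
    (fun q x hx ↦ ?_) (fun q q' x hb hx hx' ih ↦ ?_) h
  · rw [p.pStar_of_mem_supp hx, T.qx_of_mem_supp hx, Option.elim_some,
      Finset.sum_eq_zero fun q' hq' ↦ if_pos (T.supp_subset_of_mem_chain hq' hx), add_zero]
  · rw [p.pStar_of_bo_eq_some hb hx, T.qx_of_bo_eq_some hb hx, T.chain_of_bo_eq_some hb,
      Finset.sum_insert (T.self_notMem_chain_of_bo_eq_some hb), if_neg hx,
      Real.log_mul (div_pos (hε.trans_le (p.pphi_ge q q' hb)) (p.d_pos hε hb)).ne'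
        (p.pStar_pos hε hx').ne',
      Real.log_div (hε.trans_le (p.pphi_ge q q' hb)).ne' (p.d_pos hε hb).ne', ih,
      logBackoffFactor, hb, Option.elim_some]
    ring

end Companion

section Regrouping

variable [Fintype α] [Fintype Q] (T : BackoffTopology α Q) (c : α → Q → ℝ)

theorem sum_sum_Cx_mul (g : α → Q → ℝ) :
    ∑ q, ∑ x ∈ T.supp q, Cx T c x q * g x q
      = ∑ qa, ∑ x, c x qa * (T.qx qa x).elim 0 (g x) := by
  have hsupp : ∀ q, ∑ x ∈ T.supp q, Cx T c x q * g x q = ∑ x, Cx T c x q * g x q := by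
    refine fun q ↦ Finset.sum_subset (Finset.subset_univ _) fun x _ hx ↦ ?_
    rw [Cx, Finset.sum_eq_zero fun qa _ ↦ if_neg fun hq ↦ hx (T.qx_eq_some_spec hq).2, zero_mul]
  have helim : ∀ qa x, c x qa * (T.qx qa x).elim 0 (g x)
      = ∑ q, if T.qx qa x = some q then c x qa * g x q else 0 := by
    intro qa x
    cases T.qx qa x <;> simp
  rw [Finset.sum_congr rfl fun q _ ↦ hsupp q]
  simp only [helim, Cx, BackoffTopology.B, Finset.sum_filter, Finset.sum_mul]
  rw [Finset.sum_comm_cycle]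
  refine Finset.sum_congr rfl fun qa _ ↦ ?_
  rw [Finset.sum_comm]
  refine Finset.sum_congr rfl fun x _ ↦ Finset.sum_congr rfl fun q _ ↦ ?_
  by_cases hq : T.qx qa x = some q
  · rw [if_pos (T.qx_eq_some_spec hq).1, if_pos hq, if_pos hq]
  · simp only [hq, if_false, ite_self, zero_mul]

theorem sum_Cphi_mul (w : Q → ℝ) :
    ∑ q, Cphi T c q * w q
      = ∑ qa, ∑ x, c x qa * ∑ q ∈ T.chain qa, if x ∈ T.supp q then 0 else w q := by
  simp only [Cphi, BackoffTopology.chain, BackoffTopology.B, Finset.sum_filter, Finset.sum_mul,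
    Finset.mul_sum]
  rw [Finset.sum_comm]
  refine Finset.sum_congr rfl fun qa _ ↦ ?_
  rw [Finset.sum_comm]
  refine Finset.sum_congr rfl fun q _ ↦ ?_
  split_ifs with hq
  · rw [Finset.sum_mul]
    refine Finset.sum_congr rfl fun x _ ↦ ?_
    split_ifs <;> simp
  · simp

end Regrouping

theorem Companion.sum_Cphi_mul_logBackoffFactor [Fintype α] [Fintype Q] {T : BackoffTopology α Q}
    {ε : ℝ} (p : Companion T ε) (c : α → Q → ℝ) :
    ∑ q, (Cphi T c q * Real.log (p.pphi q) - ∑ q₀ ∈ T.B1 q, Cphi T c q₀ * Real.log (p.d q₀ q))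
      = ∑ q, Cphi T c q * p.logBackoffFactor q := by
  rw [Finset.sum_sub_distrib, T.sum_sum_B1, ← Finset.sum_sub_distrib]
  refine Finset.sum_congr rfl fun q _ ↦ ?_
  cases hb : T.bo q <;> simp [Companion.logBackoffFactor, hb, mul_sub]

theorem loglik_decomposition_general [Fintype α] [Fintype Q] (T : BackoffTopology α Q)
    {ε : ℝ} (hε : 0 < ε) (p : Companion T ε) (c : α → Q → ℝ)
    (hc_supp : ∀ x q, x ∉ T.suppStar q → c x q = 0) :
    ∑ q : Q, ∑ x ∈ Finset.univ.filter (fun x : α => x ∈ T.suppStar q),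
        c x q * Real.log (p.pStar q x)
      = ∑ q : Q,
          ((∑ x ∈ T.supp q, Cx T c x q * Real.log (p.p q x))
            + Cphi T c q * Real.log (p.pphi q)
            - ∑ q₀ ∈ T.B1 q, Cphi T c q₀ * Real.log (p.d q₀ q)) := by
  have hpoint : ∀ qa x, c x qa * Real.log (p.pStar qa x)
      = c x qa * (T.qx qa x).elim 0 (fun q ↦ Real.log (p.p q x))
        + c x qa * ∑ q ∈ T.chain qa, if x ∈ T.supp q then 0 else p.logBackoffFactor q := by
    intro qa x
    by_cases hx : x ∈ T.suppStar qa
    · rw [p.log_pStar hε hx, mul_add]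
    · simp [hc_supp x qa hx]
  calc _ = ∑ qa, ∑ x, c x qa * Real.log (p.pStar qa x) := by
        refine Finset.sum_congr rfl fun qa _ ↦ Finset.sum_subset (Finset.filter_subset _ _) ?_
        intro x _ hx
        rw [hc_supp x qa (by simpa using hx), zero_mul]
    _ = ∑ qa, ∑ x, c x qa * (T.qx qa x).elim 0 (fun q ↦ Real.log (p.p q x))
        + ∑ qa, ∑ x, c x qa * ∑ q ∈ T.chain qa,
            if x ∈ T.supp q then 0 else p.logBackoffFactor q := by
        simp only [hpoint, Finset.sum_add_distrib]
    _ = _ := by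
        rw [← sum_sum_Cx_mul, ← sum_Cphi_mul, ← p.sum_Cphi_mul_logBackoffFactor,
          ← Finset.sum_add_distrib]
        simp only [add_sub_assoc]

/-- The expected log-likelihood of an ε-companion's induced distribution
under nonnegative counts `c` (supported on `L*`) decomposes state-by-state in terms of the
aggregated counts `C(x,q)`, `C(φ,q)` and the denominators `d(q₀,q)`. -/
theorem loglik_decomposition [Fintype α] [Fintype Q] (T : BackoffTopology α Q)
    {ε : ℝ} (hε : 0 < ε) (p : Companion T ε) (c : α → Q → ℝ)
    (hc_nonneg : ∀ x q, 0 ≤ c x q)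
    (hc_supp : ∀ x q, x ∉ T.suppStar q → c x q = 0) :
    ∑ q : Q, ∑ x ∈ Finset.univ.filter (fun x : α => x ∈ T.suppStar q),
        c x q * Real.log (p.pStar q x)
      = ∑ q : Q,
          ((∑ x ∈ T.supp q, Cx T c x q * Real.log (p.p q x))
            + Cphi T c q * Real.log (p.pphi q)
            - ∑ q₀ ∈ T.B1 q, Cphi T c q₀ * Real.log (p.d q₀ q)) :=
  loglik_decomposition_general T hε p c hc_supp

end
end
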